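/- arXiv:2108.05619 — 2 statements merged into one kernel-verified Lean document; each statement's English description precedes it below -/
import Mathlib

section
/- Let X be a real locally convex space and g : X → (-∞, ∞] convex. Suppose x, y ∈ X with g finite on the segment [x,y], let z = (x+y)/2, and suppose g is affine on [x,y] and z' is a subgradient of g at z. Then z' is also a subgradient of g at x (and at y). -/
/-!
Midpoint convexity through `(a + y)/2` and the subgradient inequality at `z = (x + y)/2` give
`g z + z'(a - x)/2 ≤ g((a + y)/2) ≤ (g a + g y)/2`; since `g` is affine on `[x, y]`,
`g z = (g x + g y)/2`, and cancelling `g y / 2` leaves `g x + z'(a - x) ≤ g a`.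
The statement at `y` is the same argument with `x` and `y` exchanged.
-/

section Subgradient

variable {E : Type*} [AddCommGroup E] [Module ℝ E]

def IsSubgradient (g : E → EReal) (x : E) (φ : E →ₗ[ℝ] ℝ) : Prop :=
  ∀ a, g x + (φ (a - x) : EReal) ≤ g a

theorem IsSubgradient.of_midpoint {g : E → EReal} {φ : E →ₗ[ℝ] ℝ} {x y : E}
    (hbot : ∀ a, g a ≠ ⊥)
    (hconv : ∀ a b, g (midpoint ℝ a b) ≤ ((2⁻¹ : ℝ) : EReal) * g a + ((2⁻¹ : ℝ) : EReal) * g b)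
    (hx : g x ≠ ⊤) (hy : g y ≠ ⊤)
    (hmid : g (midpoint ℝ x y) = ((2⁻¹ : ℝ) : EReal) * g x + ((2⁻¹ : ℝ) : EReal) * g y)
    (h : IsSubgradient g (midpoint ℝ x y) φ) : IsSubgradient g x φ := by
  intro a
  by_cases ha : g a = ⊤
  · simp [ha]
  have hsub := h (midpoint ℝ a y)
  have hdiff : midpoint ℝ a y - midpoint ℝ x y = (2⁻¹ : ℝ) • (a - x) := by
    simp only [midpoint_eq_smul_add, invOf_eq_inv]
    module
  have hconv_ay := hconv a y
  rw [hdiff, map_smul, hmid] at hsub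
  lift g a to ℝ using ⟨ha, hbot a⟩ with ra
  lift g x to ℝ using ⟨hx, hbot x⟩ with rx
  lift g y to ℝ using ⟨hy, hbot y⟩ with ry
  lift g (midpoint ℝ a y) to ℝ using ⟨ne_top_of_le_ne_top (by simp [← EReal.coe_mul,
    ← EReal.coe_add]) hconv_ay, hbot _⟩ with rm
  norm_cast at hsub hconv_ay ⊢
  simp only [smul_eq_mul] at hsub
  linarith

end Subgradient

theorem stmt10_general {X : Type*} [AddCommGroup X] [Module ℝ X] [TopologicalSpace X]
    (g : X → EReal) (hbot : ∀ x, g x ≠ ⊥)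
    (hconv : ∀ x y : X, ∀ l : ℝ, 0 < l → l < 1 →
      g (l • x + (1 - l) • y) ≤ (l : EReal) * g x + ((1 - l : ℝ) : EReal) * g y)
    (x y : X)
    (hfin : ∀ a ∈ segment ℝ x y, g a ≠ ⊤)
    (haff : ∀ l : ℝ, 0 ≤ l → l ≤ 1 →
      g (l • x + (1 - l) • y) = (l : EReal) * g x + ((1 - l : ℝ) : EReal) * g y)
    (z' : X →L[ℝ] ℝ)
    (hsub : ∀ a : X,
      g ((2⁻¹ : ℝ) • (x + y)) + ((z' (a - (2⁻¹ : ℝ) • (x + y)) : ℝ) : EReal) ≤ g a) :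
    (∀ a : X, g x + ((z' (a - x) : ℝ) : EReal) ≤ g a) ∧
    (∀ a : X, g y + ((z' (a - y) : ℝ) : EReal) ≤ g a) := by
  have hhalf : (1 - 2⁻¹ : ℝ) = 2⁻¹ := by norm_num
  have hmid_eq : ∀ a b : X, midpoint ℝ a b = (2⁻¹ : ℝ) • a + (1 - 2⁻¹ : ℝ) • b := by
    intro a b
    rw [midpoint_eq_smul_add, invOf_eq_inv, hhalf, smul_add]
  have hmidconv : ∀ a b : X, g (midpoint ℝ a b) ≤
      ((2⁻¹ : ℝ) : EReal) * g a + ((2⁻¹ : ℝ) : EReal) * g b := fun a b => by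
    simpa only [hmid_eq, hhalf] using hconv a b 2⁻¹ (by norm_num) (by norm_num)
  have hmid : g (midpoint ℝ x y) = ((2⁻¹ : ℝ) : EReal) * g x + ((2⁻¹ : ℝ) : EReal) * g y := by
    simpa only [hmid_eq, hhalf] using haff 2⁻¹ (by norm_num) (by norm_num)
  have hsub_mid : IsSubgradient g (midpoint ℝ x y) (z' : X →ₗ[ℝ] ℝ) := by
    rw [midpoint_eq_smul_add, invOf_eq_inv]
    exact hsub
  have hx := hfin x (left_mem_segment ℝ x y)
  have hy := hfin y (right_mem_segment ℝ x y)
  refine ⟨IsSubgradient.of_midpoint hbot hmidconv hx hy hmid hsub_mid, ?_⟩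
  refine IsSubgradient.of_midpoint (y := x) hbot hmidconv hy hx ?_ ?_
  · rw [midpoint_comm, hmid, add_comm]
  · rwa [midpoint_comm]

/-- If `g` is convex, finite and affine on the segment `[x,y]`, `z = (x+y)/2`, and `z'` is a
subgradient of `g` at `z`, then `z'` is also a subgradient of `g` at `x` and at `y`. -/
theorem stmt10 {X : Type*} [AddCommGroup X] [Module ℝ X] [TopologicalSpace X]
    [IsTopologicalAddGroup X] [ContinuousSMul ℝ X]
    (g : X → EReal) (hbot : ∀ x, g x ≠ ⊥)
    (hconv : ∀ x y : X, ∀ l : ℝ, 0 < l → l < 1 →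
      g (l • x + (1 - l) • y) ≤ (l : EReal) * g x + ((1 - l : ℝ) : EReal) * g y)
    (x y : X)
    (hfin : ∀ a ∈ segment ℝ x y, g a ≠ ⊤)
    (haff : ∀ l : ℝ, 0 ≤ l → l ≤ 1 →
      g (l • x + (1 - l) • y) = (l : EReal) * g x + ((1 - l : ℝ) : EReal) * g y)
    (z' : X →L[ℝ] ℝ)
    (hsub : ∀ a : X,
      g ((2⁻¹ : ℝ) • (x + y)) + ((z' (a - (2⁻¹ : ℝ) • (x + y)) : ℝ) : EReal) ≤ g a) :
    (∀ a : X, g x + ((z' (a - x) : ℝ) : EReal) ≤ g a) ∧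
    (∀ a : X, g y + ((z' (a - y) : ℝ) : EReal) ≤ g a) :=
  stmt10_general g hbot hconv x y hfin haff z' hsub
end

section
/- Let X be a real locally convex space and f : X → (-∞, ∞] such that f** is essentially strictly convex and f(x) = f**(x) for all x ∈ dom(∂f**). Then for every x' ∈ X', the tilted function x ↦ f(x) - ⟨x', x⟩ has at most one global minimizer. -/
/-- The convex (Fenchel) conjugate of `f : X → (-∞,∞]`. -/
noncomputable def fenchelConj {X : Type*} [AddCommGroup X] [Module ℝ X] [TopologicalSpace X]
    (f : X → EReal) (x' : X →L[ℝ] ℝ) : EReal :=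
  ⨆ x : X, ((x' x : ℝ) : EReal) - f x

/-- The biconjugate `f**`. -/
noncomputable def fenchelBiconj {X : Type*} [AddCommGroup X] [Module ℝ X] [TopologicalSpace X]
    (f : X → EReal) (x : X) : EReal :=
  ⨆ x' : X →L[ℝ] ℝ, ((x' x : ℝ) : EReal) - fenchelConj f x'

/-- The Fenchel–Moreau subdifferential of `g` at `x`. -/
def fenchelSubdiff {X : Type*} [AddCommGroup X] [Module ℝ X] [TopologicalSpace X]
    (g : X → EReal) (x : X) : Set (X →L[ℝ] ℝ) :=
  {x' | ∀ a : X, g x + ((x' (a - x) : ℝ) : EReal) ≤ g a}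

/-! If `x₀ ≠ x₁` both minimize `f - x'`, with minimal value `m`, then `x' + m` is an affine
minorant of `f`, hence of `f**`, and `f** ≤ f` touches it at `x₀` and `x₁`. Being a supremum of
affine functions, `f**` lies below its chords, so `f** = x' + m` on `[x₀, x₁]`. Every point of the
segment then has `x'` as a subgradient, and `f**` is affine on this convex subset of `dom ∂f**`,
contradicting strict convexity. If `m = ∞`, then `f ≡ ∞ ≡ f**` and `dom ∂f**` is everything. -/

theorem EReal.coe_sub_le_comm (a : ℝ) (b c : EReal) :
    (a : EReal) - b ≤ c ↔ (a : EReal) - c ≤ b := by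
  induction b <;> induction c <;> simp [← EReal.coe_sub]
  constructor <;> intro <;> linarith

theorem EReal.eq_top_of_sub_coe_eq_top {a : EReal} {r : ℝ} (h : a - r = ⊤) : a = ⊤ := by
  rw [← EReal.sub_add_cancel (a := a) (b := r), h, EReal.top_add_coe]

theorem EReal.sub_coe_ne_bot {a : EReal} (r : ℝ) (h : a ≠ ⊥) : a - r ≠ ⊥ := by
  contrapose! h
  rw [← EReal.sub_add_cancel (a := a) (b := r), h, EReal.bot_add]

section

variable {X : Type*} [AddCommGroup X] [Module ℝ X] [TopologicalSpace X]

def EssentiallyStrictConvex (g : X → EReal) : Prop :=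
  ∀ C : Set X, C ⊆ {x | (fenchelSubdiff g x).Nonempty} → Convex ℝ C →
    ∀ x ∈ C, ∀ y ∈ C, x ≠ y → ∀ l : ℝ, 0 < l → l < 1 →
      g (l • x + (1 - l) • y) < (l : EReal) * g x + ((1 - l : ℝ) : EReal) * g y

theorem coe_sub_le_fenchelConj (f : X → EReal) (x' : X →L[ℝ] ℝ) (x : X) :
    ((x' x : ℝ) : EReal) - f x ≤ fenchelConj f x' :=
  le_iSup (fun y => ((x' y : ℝ) : EReal) - f y) x

theorem coe_sub_fenchelConj_le_fenchelBiconj (f : X → EReal) (x' : X →L[ℝ] ℝ) (x : X) :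
    ((x' x : ℝ) : EReal) - fenchelConj f x' ≤ fenchelBiconj f x :=
  le_iSup (fun p : X →L[ℝ] ℝ => ((p x : ℝ) : EReal) - fenchelConj f p) x'

theorem fenchelBiconj_le (f : X → EReal) (x : X) : fenchelBiconj f x ≤ f x :=
  iSup_le fun x' => (EReal.coe_sub_le_comm _ _ _).1 (coe_sub_le_fenchelConj f x' x)

theorem fenchelBiconj_eq_top_of_forall_eq_top {f : X → EReal} (hf : ∀ x, f x = ⊤) (x : X) :
    fenchelBiconj f x = ⊤ := by
  have hconj : fenchelConj f 0 = ⊥ :=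
    le_bot_iff.1 <| iSup_le fun y => by rw [hf y, EReal.sub_top]
  simpa [hconj] using coe_sub_fenchelConj_le_fenchelBiconj f 0 x

theorem coe_add_le_fenchelBiconj {f : X → EReal} {x' : X →L[ℝ] ℝ} {m : ℝ}
    (hf : ∀ y, ((x' y + m : ℝ) : EReal) ≤ f y) (x : X) :
    ((x' x + m : ℝ) : EReal) ≤ fenchelBiconj f x := by
  have hconj : fenchelConj f x' ≤ ((-m : ℝ) : EReal) := by
    refine iSup_le fun y => (EReal.coe_sub_le_comm _ _ _).1 ?_
    rw [← EReal.coe_sub, sub_neg_eq_add]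
    exact hf y
  calc ((x' x + m : ℝ) : EReal) = ((x' x : ℝ) : EReal) - ((-m : ℝ) : EReal) := by
        rw [← EReal.coe_sub, sub_neg_eq_add]
    _ ≤ ((x' x : ℝ) : EReal) - fenchelConj f x' := EReal.sub_le_sub le_rfl hconj
    _ ≤ fenchelBiconj f x := coe_sub_fenchelConj_le_fenchelBiconj f x' x

theorem fenchelBiconj_combo_le (f : X → EReal) {x₀ x₁ : X} {r₀ r₁ t : ℝ}
    (h₀ : fenchelBiconj f x₀ ≤ r₀) (h₁ : fenchelBiconj f x₁ ≤ r₁) (ht₀ : 0 ≤ t) (ht₁ : t ≤ 1) :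
    fenchelBiconj f (t • x₀ + (1 - t) • x₁) ≤ ((t * r₀ + (1 - t) * r₁ : ℝ) : EReal) := by
  refine iSup_le fun p => ?_
  have hp₀ := (coe_sub_fenchelConj_le_fenchelBiconj f p x₀).trans h₀
  have hp₁ := (coe_sub_fenchelConj_le_fenchelBiconj f p x₁).trans h₁
  induction hc : fenchelConj f p with
  | bot => simp [hc] at hp₀
  | top => simp
  | coe s =>
    rw [hc, ← EReal.coe_sub, EReal.coe_le_coe_iff] at hp₀ hp₁
    rw [← EReal.coe_sub, EReal.coe_le_coe_iff, map_add, map_smul, map_smul, smul_eq_mul,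
      smul_eq_mul]
    nlinarith

theorem fenchelBiconj_eq_on_segment {f : X → EReal} {x' : X →L[ℝ] ℝ} {m : ℝ} {x₀ x₁ : X}
    (hle : ∀ y, ((x' y + m : ℝ) : EReal) ≤ f y) (h₀ : f x₀ ≤ ((x' x₀ + m : ℝ) : EReal))
    (h₁ : f x₁ ≤ ((x' x₁ + m : ℝ) : EReal)) :
    ∀ z ∈ segment ℝ x₀ x₁, fenchelBiconj f z = ((x' z + m : ℝ) : EReal) := by
  rintro z ⟨t, s, ht, hs, hts, rfl⟩
  obtain rfl : s = 1 - t := by linarith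
  refine le_antisymm ?_ (coe_add_le_fenchelBiconj hle _)
  refine (fenchelBiconj_combo_le f ((fenchelBiconj_le f x₀).trans h₀)
    ((fenchelBiconj_le f x₁).trans h₁) ht (by linarith)).trans_eq ?_
  simp only [map_add, map_smul, smul_eq_mul]
  ring_nf

theorem mem_fenchelSubdiff_of_affine_minorant {g : X → EReal} {x' : X →L[ℝ] ℝ} {m : ℝ} {z : X}
    (hle : ∀ a, ((x' a + m : ℝ) : EReal) ≤ g a) (hz : g z = ((x' z + m : ℝ) : EReal)) :
    x' ∈ fenchelSubdiff g z := fun a => by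
  rw [hz, ← EReal.coe_add, map_sub]
  convert hle a using 2
  ring

theorem EssentiallyStrictConvex.eq_of_forall_eq_top {g : X → EReal}
    (hg : EssentiallyStrictConvex g) (htop : ∀ x, g x = ⊤) (x₀ x₁ : X) : x₀ = x₁ := by
  by_contra hne
  have hsub : ∀ x, (fenchelSubdiff g x).Nonempty := fun x =>
    ⟨0, fun a => by simp [htop]⟩
  have h := hg Set.univ (fun x _ => hsub x) convex_univ x₀ trivial x₁ trivial hne (1 / 2)
    (by norm_num) (by norm_num)
  exact (h.trans_le le_top).ne (htop _)

theorem EssentiallyStrictConvex.eq_of_eq_affine_on_segment {g : X → EReal}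
    (hg : EssentiallyStrictConvex g) {x' : X →L[ℝ] ℝ} {m : ℝ} {x₀ x₁ : X}
    (hle : ∀ a, ((x' a + m : ℝ) : EReal) ≤ g a)
    (hseg : ∀ z ∈ segment ℝ x₀ x₁, g z = ((x' z + m : ℝ) : EReal)) : x₀ = x₁ := by
  by_contra hne
  have h₀ := left_mem_segment ℝ x₀ x₁
  have h₁ := right_mem_segment ℝ x₀ x₁
  have hmid : (1 / 2 : ℝ) • x₀ + (1 - 1 / 2 : ℝ) • x₁ ∈ segment ℝ x₀ x₁ :=
    convex_segment x₀ x₁ h₀ h₁ (by norm_num) (by norm_num) (by norm_num)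
  have h := hg (segment ℝ x₀ x₁)
    (fun z hz => ⟨x', mem_fenchelSubdiff_of_affine_minorant hle (hseg z hz)⟩)
    (convex_segment x₀ x₁) x₀ h₀ x₁ h₁ hne (1 / 2) (by norm_num) (by norm_num)
  rw [hseg _ hmid, hseg _ h₀, hseg _ h₁, ← EReal.coe_mul, ← EReal.coe_mul, ← EReal.coe_add,
    EReal.coe_lt_coe_iff, map_add, map_smul, map_smul, smul_eq_mul, smul_eq_mul] at h
  linarith

end

theorem stmt15_general {X : Type*} [AddCommGroup X] [Module ℝ X] [TopologicalSpace X]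
    (f : X → EReal) (hbot : ∀ x, f x ≠ ⊥)
    (hessstrict : ∀ C : Set X,
      C ⊆ {x | (fenchelSubdiff (fenchelBiconj f) x).Nonempty} → Convex ℝ C →
      ∀ x ∈ C, ∀ y ∈ C, x ≠ y → ∀ l : ℝ, 0 < l → l < 1 →
        fenchelBiconj f (l • x + (1 - l) • y)
          < (l : EReal) * fenchelBiconj f x + ((1 - l : ℝ) : EReal) * fenchelBiconj f y) :
    ∀ x' : X →L[ℝ] ℝ, ∀ x₀ x₁ : X,
      (∀ y, f x₀ - ((x' x₀ : ℝ) : EReal) ≤ f y - ((x' y : ℝ) : EReal)) →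
      (∀ y, f x₁ - ((x' x₁ : ℝ) : EReal) ≤ f y - ((x' y : ℝ) : EReal)) →
      x₀ = x₁ := by
  intro x' x₀ x₁ h₀ h₁
  have hg : EssentiallyStrictConvex (fenchelBiconj f) := hessstrict
  induction hμ : f x₀ - ((x' x₀ : ℝ) : EReal) with
  | bot => exact absurd hμ (EReal.sub_coe_ne_bot _ (hbot x₀))
  | top =>
    refine hg.eq_of_forall_eq_top (fenchelBiconj_eq_top_of_forall_eq_top fun y => ?_) x₀ x₁
    exact EReal.eq_top_of_sub_coe_eq_top (top_le_iff.1 (hμ ▸ h₀ y))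
  | coe m =>
    have hle : ∀ y, ((x' y + m : ℝ) : EReal) ≤ f y := fun y => by
      rw [EReal.coe_add, add_comm]
      exact EReal.add_le_of_le_sub (hμ ▸ h₀ y)
    have hge : ∀ y, f y - ((x' y : ℝ) : EReal) ≤ m → f y ≤ ((x' y + m : ℝ) : EReal) :=
      fun y hy => by
        rw [EReal.coe_add, add_comm]
        exact (EReal.sub_le_iff_le_add (.inl (EReal.coe_ne_bot _))
          (.inl (EReal.coe_ne_top _))).1 hy
    exact hg.eq_of_eq_affine_on_segment (coe_add_le_fenchelBiconj hle)
      (fenchelBiconj_eq_on_segment hle (hge x₀ hμ.le) (hge x₁ (hμ ▸ h₁ x₀)))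

/-- If `f**` is essentially strictly convex and `f = f**` on `dom(∂f**)`, then every tilted
problem `min f - x'` has at most one global minimizer. -/
theorem stmt15 {X : Type*} [AddCommGroup X] [Module ℝ X] [TopologicalSpace X]
    [IsTopologicalAddGroup X] [ContinuousSMul ℝ X] [LocallyConvexSpace ℝ X]
    (f : X → EReal) (hbot : ∀ x, f x ≠ ⊥)
    (hessstrict : ∀ C : Set X,
      C ⊆ {x | (fenchelSubdiff (fenchelBiconj f) x).Nonempty} → Convex ℝ C →
      ∀ x ∈ C, ∀ y ∈ C, x ≠ y → ∀ l : ℝ, 0 < l → l < 1 →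
        fenchelBiconj f (l • x + (1 - l) • y)
          < (l : EReal) * fenchelBiconj f x + ((1 - l : ℝ) : EReal) * fenchelBiconj f y)
    (hagree : ∀ x : X, (fenchelSubdiff (fenchelBiconj f) x).Nonempty →
      f x = fenchelBiconj f x) :
    ∀ x' : X →L[ℝ] ℝ, ∀ x₀ x₁ : X,
      (∀ y, f x₀ - ((x' x₀ : ℝ) : EReal) ≤ f y - ((x' y : ℝ) : EReal)) →
      (∀ y, f x₁ - ((x' x₁ : ℝ) : EReal) ≤ f y - ((x' y : ℝ) : EReal)) →
      x₀ = x₁ :=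
  stmt15_general f hbot hessstrict
end
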